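/- Let 0 < α < 1/2 and let q : ℤ_{≥0} → ℤ_{>0} satisfy: (a) q(0) = 1; (b) q(s₁)q(s₂−1) < q(s₁+s₂) ≤ q(s₁)q(s₂) for all s₁, s₂ > 0; (c) q(s+1)α^{s+2} < q(s)α^{s+1} < Σ_{i=s+2}^∞ q(i−1)α^i for all s > 0; (d) Σ_{i=1}^∞ q(i−1)α^i = 1. For x ∈ [0,1] with binary expansion x = Σ x_i/2^i, set r(x)_i = Π_{s=0}^{i−1} q(s)^{p_{i,s}}, where p_{i,s} is the number of maximal runs of exactly s consecutive 1s among the digits x_1,…,x_{i−1}, and define f(x) = Σ_{i=1}^∞ x_i·r(x)_i·α^i. Then f is strictly increasing on [0,1]. -/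
import Mathlib


/-- The `i`-th binary digit of `x` (indices from 1), using the terminating
(floor) expansion at dyadic rationals. -/
noncomputable def binDigit (x : ℝ) (i : ℕ) : ℕ := ⌊x * 2 ^ i⌋.toNat % 2

/-- `runCount b i s`: the number of maximal runs of exactly `s` consecutive 1s
among the digits `b 1, …, b (i-1)`. -/
def runCount (b : ℕ → ℕ) (i s : ℕ) : ℕ :=
  ((Finset.Icc 1 i).filter fun m =>
    m + s ≤ i ∧ (∀ t ∈ Finset.Ico m (m + s), b t = 1) ∧
      (m = 1 ∨ b (m - 1) = 0) ∧ (m + s = i ∨ b (m + s) = 0)).card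

/-- `r(x)_i = Π_s q(s)^{p_{i,s}}` where `p_{i,s}` counts maximal runs of `s`
consecutive 1s among the first `i-1` binary digits (`q 0 = 1`, so the factor
`s = 0` is omitted). -/
noncomputable def rWeight (q : ℕ → ℕ) (b : ℕ → ℕ) (i : ℕ) : ℝ :=
  ∏ s ∈ Finset.Icc 1 i, (q s : ℝ) ^ runCount b i s

/-- `f(x) = Σ_{i≥1} x_i · r(x)_i · α^i` (with `f 1 = 1`, corresponding to the
all-ones expansion of `1`). -/
noncomputable def fCA (α : ℝ) (q : ℕ → ℕ) (x : ℝ) : ℝ :=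
  if x = 1 then 1 else
    ∑' i : ℕ, (binDigit x (i + 1) : ℝ) * rWeight q (binDigit x) (i + 1) * α ^ (i + 1)

section Comb

lemma runPred_imp {b c : ℕ → ℕ} {i s m : ℕ} (h : ∀ t, 1 ≤ t → t < i → b t = c t)
    (hm : 1 ≤ m) (hmi : m ≤ i) :
    (m + s ≤ i ∧ (∀ t ∈ Finset.Ico m (m + s), b t = 1) ∧
      (m = 1 ∨ b (m - 1) = 0) ∧ (m + s = i ∨ b (m + s) = 0)) →
    (m + s ≤ i ∧ (∀ t ∈ Finset.Ico m (m + s), c t = 1) ∧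
      (m = 1 ∨ c (m - 1) = 0) ∧ (m + s = i ∨ c (m + s) = 0)) := by
  rintro ⟨h1, h2, h3, h4⟩
  refine ⟨h1, ?_, ?_, ?_⟩
  · intro t ht
    simp only [Finset.mem_Ico] at ht
    rw [← h t (le_trans hm ht.1) (lt_of_lt_of_le ht.2 h1)]
    exact h2 t (by simp only [Finset.mem_Ico]; exact ht)
  · rcases h3 with h3 | h3
    · exact Or.inl h3
    · rcases Nat.eq_or_lt_of_le hm with e | lt
      · exact Or.inl e.symm
      · exact Or.inr (by rw [← h (m-1) (by omega) (by omega)]; exact h3)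
  · rcases h4 with h4 | h4
    · exact Or.inl h4
    · rcases Nat.eq_or_lt_of_le h1 with e | lt
      · exact Or.inl e
      · exact Or.inr (by rw [← h (m+s) (by omega) (by omega)]; exact h4)

lemma runCount_congr {b c : ℕ → ℕ} {i : ℕ} (s : ℕ)
    (h : ∀ t, 1 ≤ t → t < i → b t = c t) :
    runCount b i s = runCount c i s := by
  unfold runCount
  congr 1
  apply Finset.filter_congr
  intro m hm
  simp only [Finset.mem_Icc] at hm
  exact ⟨runPred_imp h hm.1 hm.2, runPred_imp (fun t h1 h2 => (h t h1 h2).symm) hm.1 hm.2⟩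

lemma runCount_eq_zero {b : ℕ → ℕ} {i s : ℕ} (h : i ≤ s) : runCount b i s = 0 := by
  unfold runCount
  rw [Finset.card_eq_zero, Finset.filter_eq_empty_iff]
  intro m hm
  simp only [Finset.mem_Icc] at hm
  rintro ⟨h1, -, -, -⟩
  omega

lemma rWeight_pad (q : ℕ → ℕ) (b : ℕ → ℕ) {i N : ℕ} (h : i ≤ N) :
    rWeight q b i = ∏ s ∈ Finset.Icc 1 N, (q s : ℝ) ^ runCount b i s := by
  unfold rWeight
  apply Finset.prod_subset
  · exact Finset.Icc_subset_Icc_right h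
  · intro s hs hs'
    simp only [Finset.mem_Icc] at hs hs'
    rw [runCount_eq_zero (by omega), pow_zero]

end Comb

lemma runCount_split {b : ℕ → ℕ} {k i s : ℕ} (hbk : b k = 0) (hki : k ≤ i) (hs : 1 ≤ s) :
    runCount b i s = runCount b k s + runCount (fun t => b (k + t)) (i - k) s := by
  classical
  unfold runCount
  rw [← Finset.card_filter_add_card_filter_not (p := fun m => m + s ≤ k)]
  congr 1
  · -- low part
    congr 1
    rw [Finset.filter_filter]
    ext m
    simp only [Finset.mem_filter, Finset.mem_Icc]
    constructor
    · rintro ⟨⟨hm1, hmi⟩, ⟨h1, h2, h3, h4⟩, hle⟩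
      refine ⟨⟨hm1, by omega⟩, by omega, h2, h3, ?_⟩
      rcases h4 with h4 | h4
      · left; omega
      · right; exact h4
    · rintro ⟨⟨hm1, hmk⟩, h1, h2, h3, h4⟩
      refine ⟨⟨hm1, by omega⟩, ⟨by omega, h2, h3, ?_⟩, h1⟩
      rcases h4 with h4 | h4
      · right; rw [h4]; exact hbk
      · right; exact h4
  · -- high part
    apply Finset.card_bij' (fun m _ => m - k) (fun m _ => m + k)
    · -- maps to
      intro m hm
      rw [Finset.mem_filter] at hm
      obtain ⟨hm, hnle⟩ := hm
      rw [Finset.mem_filter, Finset.mem_Icc] at hm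
      obtain ⟨⟨hm1, hmi⟩, h1, h2, h3, h4⟩ := hm
      have hkm : k + 1 ≤ m := by
        by_contra hc
        have hk : k ∈ Finset.Ico m (m + s) := by simp only [Finset.mem_Ico]; omega
        have := h2 k hk
        omega
      rw [Finset.mem_filter, Finset.mem_Icc]
      refine ⟨⟨by omega, by omega⟩, by omega, ?_, ?_, ?_⟩
      · intro t ht
        simp only [Finset.mem_Ico] at ht
        have : k + t ∈ Finset.Ico m (m + s) := by simp only [Finset.mem_Ico]; omega
        exact h2 _ this
      · by_cases hm'1 : m - k = 1
        · left; exact hm'1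
        · right
          show b (k + (m - k - 1)) = 0
          have : k + (m - k - 1) = m - 1 := by omega
          rw [this]
          rcases h3 with h3 | h3
          · omega
          · exact h3
      · rcases h4 with h4 | h4
        · left; omega
        · right
          show b (k + (m - k + s)) = 0
          have : k + (m - k + s) = m + s := by omega
          rw [this]; exact h4
    · -- maps back
      intro m' hm'
      rw [Finset.mem_filter, Finset.mem_Icc] at hm'
      obtain ⟨⟨hm1, hmik⟩, h1, h2, h3, h4⟩ := hm'
      rw [Finset.mem_filter, Finset.mem_filter, Finset.mem_Icc]
      refine ⟨⟨⟨by omega, by omega⟩, by omega, ?_, ?_, ?_⟩, by omega⟩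
      · intro t ht
        simp only [Finset.mem_Ico] at ht
        have he : t = k + (t - k) := by omega
        rw [he]
        exact h2 (t - k) (by simp only [Finset.mem_Ico]; omega)
      · rcases h3 with h3 | h3
        · by_cases hk0 : k = 0
          · left; omega
          · right
            have : m' + k - 1 = k := by omega
            rw [this]; exact hbk
        · right
          have : m' + k - 1 = k + (m' - 1) := by omega
          rw [this]; exact h3
      · rcases h4 with h4 | h4
        · left; omega
        · right
          have : m' + k + s = k + (m' + s) := by omega
          rw [this]; exact h4
    · intro m hm
      rw [Finset.mem_filter] at hm
      obtain ⟨hm, hnle⟩ := hm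
      rw [Finset.mem_filter, Finset.mem_Icc] at hm
      obtain ⟨⟨hm1, hmi⟩, h1, h2, h3, h4⟩ := hm
      have hkm : k + 1 ≤ m := by
        by_contra hc
        have hk : k ∈ Finset.Ico m (m + s) := by simp only [Finset.mem_Ico]; omega
        have := h2 k hk
        omega
      omega
    · intro m' _
      omega

section Part2
variable {q : ℕ → ℕ}

lemma rWeight_split {b : ℕ → ℕ} {k i : ℕ} (hbk : b k = 0) (hki : k ≤ i) :
    rWeight q b i = rWeight q b k * rWeight q (fun t => b (k + t)) (i - k) := by
  rw [rWeight_pad q b hki, rWeight_pad q (fun t => b (k + t)) (Nat.sub_le i k),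
    ← Finset.prod_mul_distrib]
  unfold rWeight
  apply Finset.prod_congr rfl
  intro s hs
  simp only [Finset.mem_Icc] at hs
  rw [runCount_split hbk hki hs.1, pow_add]

lemma rWeight_one_le (hqpos : ∀ s, 0 < q s) (b : ℕ → ℕ) (i : ℕ) :
    1 ≤ rWeight q b i := by
  have : rWeight q b i = ((∏ s ∈ Finset.Icc 1 i, q s ^ runCount b i s : ℕ) : ℝ) := by
    unfold rWeight; push_cast; rfl
  rw [this]
  have hpos : 0 < ∏ s ∈ Finset.Icc 1 i, q s ^ runCount b i s :=
    Finset.prod_pos fun s _ => pow_pos (hqpos s) _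
  exact_mod_cast hpos

lemma rWeight_pos (hqpos : ∀ s, 0 < q s) (b : ℕ → ℕ) (i : ℕ) :
    0 < rWeight q b i := lt_of_lt_of_le one_pos (rWeight_one_le hqpos b i)

lemma rWeight_allOnes (hq0 : q 0 = 1) {b : ℕ → ℕ} {i : ℕ}
    (h : ∀ t, 1 ≤ t → t < i → b t = 1) (hi : 1 ≤ i) :
    rWeight q b i = q (i - 1) := by
  rcases Nat.eq_or_lt_of_le hi with e | hi2
  · -- i = 1
    rw [← e]
    unfold rWeight
    rw [show Finset.Icc 1 1 = {1} from rfl, Finset.prod_singleton,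
      runCount_eq_zero (le_refl 1), pow_zero]
    simp [hq0]
  · -- i ≥ 2
    have hcount : ∀ s, 1 ≤ s → s ≤ i → runCount b i s = if s = i - 1 then 1 else 0 := by
      intro s hs1 hsi
      unfold runCount
      have hset : ((Finset.Icc 1 i).filter fun m =>
          m + s ≤ i ∧ (∀ t ∈ Finset.Ico m (m + s), b t = 1) ∧
            (m = 1 ∨ b (m - 1) = 0) ∧ (m + s = i ∨ b (m + s) = 0)) =
          if s = i - 1 then {1} else ∅ := by
        ext m
        simp only [Finset.mem_filter, Finset.mem_Icc]
        constructor
        · rintro ⟨⟨hm1, hmi⟩, h1, h2, h3, h4⟩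
          have hm : m = 1 := by
            rcases h3 with h3 | h3
            · exact h3
            · by_cases hm2 : m = 1
              · exact hm2
              · exfalso
                have := h (m - 1) (by omega) (by omega)
                omega
          have hms : m + s = i := by
            rcases h4 with h4 | h4
            · exact h4
            · by_cases hms2 : m + s = i
              · exact hms2
              · exfalso
                have := h (m + s) (by omega) (by omega)
                omega
          have : s = i - 1 := by omega
          simp [this, hm]
        · intro hm
          by_cases hsi1 : s = i - 1
          · rw [if_pos hsi1, Finset.mem_singleton] at hm
            subst hm
            refine ⟨⟨le_refl 1, by omega⟩, by omega, ?_, Or.inl rfl, Or.inl (by omega)⟩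
            intro t ht
            simp only [Finset.mem_Ico] at ht
            exact h t ht.1 (by omega)
          · simp [hsi1] at hm
      rw [hset]
      split <;> simp
    unfold rWeight
    rw [Finset.prod_eq_single (i - 1)]
    · rw [hcount (i-1) (by omega) (by omega), if_pos rfl, pow_one]
    · intro s hs hne
      simp only [Finset.mem_Icc] at hs
      rw [hcount s hs.1 hs.2, if_neg hne, pow_zero]
    · intro hmem
      exfalso
      exact hmem (by simp only [Finset.mem_Icc]; omega)

lemma q_mono (hq0 : q 0 = 1) (hqpos : ∀ s, 0 < q s)
    (hqb : ∀ s₁ s₂ : ℕ, 0 < s₁ → 0 < s₂ →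
      q s₁ * q (s₂ - 1) < q (s₁ + s₂) ∧ q (s₁ + s₂) ≤ q s₁ * q s₂) :
    Monotone q := by
  apply monotone_nat_of_le_succ
  intro n
  rcases Nat.eq_zero_or_pos n with rfl | hn
  · rw [hq0]; exact hqpos 1
  · have := (hqb n 1 hn one_pos).1
    simp only [Nat.sub_self, hq0, mul_one] at this
    omega

lemma q_merge (hq0 : q 0 = 1) (hqpos : ∀ s, 0 < q s)
    (hqb : ∀ s₁ s₂ : ℕ, 0 < s₁ → 0 < s₂ →
      q s₁ * q (s₂ - 1) < q (s₁ + s₂) ∧ q (s₁ + s₂) ≤ q s₁ * q s₂)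
    (a b : ℕ) : q a * q b ≤ q (a + b + 1) := by
  rcases Nat.eq_zero_or_pos a with rfl | ha
  · rw [hq0, one_mul]
    exact q_mono hq0 hqpos hqb (by omega)
  · have := (hqb a (b + 1) ha (Nat.succ_pos b)).1
    simp only [Nat.add_sub_cancel] at this
    calc q a * q b ≤ q (a + (b + 1)) := le_of_lt this
    _ = q (a + b + 1) := by ring_nf

lemma rWeight_le (hq0 : q 0 = 1) (hqpos : ∀ s, 0 < q s)
    (hqb : ∀ s₁ s₂ : ℕ, 0 < s₁ → 0 < s₂ →
      q s₁ * q (s₂ - 1) < q (s₁ + s₂) ∧ q (s₁ + s₂) ≤ q s₁ * q s₂) :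
    ∀ i, ∀ b : ℕ → ℕ, (∀ t, b t = 0 ∨ b t = 1) → 1 ≤ i → rWeight q b i ≤ (q (i - 1) : ℝ) := by
  intro i
  induction i using Nat.strong_induction_on with
  | _ i IH =>
    intro b hb hi
    by_cases hall : ∀ t, 1 ≤ t → t < i → b t = 1
    · rw [rWeight_allOnes hq0 hall hi]
    · push_neg at hall
      obtain ⟨j, hj1, hji, hbj'⟩ := hall
      have hbj : b j = 0 := by rcases hb j with h | h; exact h; exact absurd h hbj'
      rw [rWeight_split hbj (by omega)]
      have h1 : rWeight q b j ≤ (q (j - 1) : ℝ) := IH j (by omega) b hb hj1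
      have h2 : rWeight q (fun t => b (j + t)) (i - j) ≤ (q (i - j - 1) : ℝ) :=
        IH (i - j) (by omega) _ (fun t => hb (j + t)) (by omega)
      calc rWeight q b j * rWeight q (fun t => b (j + t)) (i - j)
          ≤ (q (j - 1) : ℝ) * (q (i - j - 1) : ℝ) := by
            apply mul_le_mul h1 h2 (le_of_lt (rWeight_pos hqpos _ _)) (by positivity)
        _ ≤ (q (i - 1) : ℝ) := by
            have := q_merge hq0 hqpos hqb (j - 1) (i - j - 1)
            have he : j - 1 + (i - j - 1) + 1 = i - 1 := by omega
            rw [he] at this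
            exact_mod_cast this
end Part2

section Digits

lemma binDigit_zero_or_one (x : ℝ) (i : ℕ) : binDigit x i = 0 ∨ binDigit x i = 1 :=
  Nat.mod_two_eq_zero_or_one _

lemma floor_pow_nonneg {x : ℝ} (hx : 0 ≤ x) (i : ℕ) : 0 ≤ ⌊x * 2 ^ i⌋ :=
  Int.floor_nonneg.mpr (by positivity)

lemma binDigit_cast {x : ℝ} (hx : 0 ≤ x) (i : ℕ) :
    (binDigit x i : ℤ) = ⌊x * 2 ^ i⌋ % 2 := by
  unfold binDigit
  have h := floor_pow_nonneg hx i
  push_cast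
  rw [Int.toNat_of_nonneg h]

lemma floor_pow_succ {x : ℝ} (hx : 0 ≤ x) (i : ℕ) :
    ⌊x * 2 ^ (i + 1)⌋ = 2 * ⌊x * 2 ^ i⌋ + (binDigit x (i + 1) : ℤ) := by
  have key : 2 * ⌊x * 2 ^ i⌋ ≤ ⌊x * 2 ^ (i + 1)⌋ ∧
      ⌊x * 2 ^ (i + 1)⌋ < 2 * ⌊x * 2 ^ i⌋ + 2 := by
    constructor
    · apply Int.le_floor.mpr
      push_cast
      calc (2 : ℝ) * ⌊x * 2 ^ i⌋ ≤ 2 * (x * 2 ^ i) := by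
            have := Int.floor_le (x * 2 ^ i); linarith
        _ = x * 2 ^ (i + 1) := by ring
    · apply Int.floor_lt.mpr
      push_cast
      have := Int.lt_floor_add_one (x * 2 ^ i)
      calc x * 2 ^ (i + 1) = 2 * (x * 2 ^ i) := by ring
        _ < 2 * (⌊x * 2 ^ i⌋ + 1) := by linarith
        _ = 2 * ⌊x * 2 ^ i⌋ + 2 := by ring
  have hb := binDigit_cast hx (i + 1)
  omega

lemma floor_one_digit {x : ℝ} (hx : 0 ≤ x) (hx1 : x < 1) : ⌊x * 2 ^ 0⌋ = 0 := by
  rw [pow_zero, mul_one]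
  exact Int.floor_eq_zero_iff.mpr ⟨hx, hx1⟩

lemma floor_congr {x y : ℝ} (hx : 0 ≤ x) (hx1 : x < 1) (hy : 0 ≤ y) (hy1 : y < 1)
    (i : ℕ) (h : ∀ t, 1 ≤ t → t ≤ i → binDigit x t = binDigit y t) :
    ⌊x * 2 ^ i⌋ = ⌊y * 2 ^ i⌋ := by
  induction i with
  | zero => rw [floor_one_digit hx hx1, floor_one_digit hy hy1]
  | succ n IH =>
    rw [floor_pow_succ hx n, floor_pow_succ hy n,
      IH (fun t ht1 ht2 => h t ht1 (by omega)), h (n+1) (by omega) (le_refl _)]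

/-- digits are not eventually all ones -/
lemma exists_digit_zero {x : ℝ} (hx : 0 ≤ x) (hx1 : x < 1) (k : ℕ) :
    ∃ j, k < j ∧ binDigit x j = 0 := by
  by_contra hc
  push_neg at hc
  have hone : ∀ j, k < j → binDigit x j = 1 := by
    intro j hj
    rcases binDigit_zero_or_one x j with h | h
    · exact absurd h (hc j hj)
    · exact h
  have hrec : ∀ m : ℕ, ⌊x * 2 ^ (k + m)⌋ = 2 ^ m * ⌊x * 2 ^ k⌋ + 2 ^ m - 1 := by
    intro m
    induction m with
    | zero => simp
    | succ n IH =>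
      have : k + (n + 1) = (k + n) + 1 := by ring
      rw [this, floor_pow_succ hx (k + n), IH, hone (k + n + 1) (by omega)]
      push_cast
      ring
  set a := ⌊x * 2 ^ k⌋ with ha
  have hlt : x * 2 ^ k < a + 1 := Int.lt_floor_add_one _
  have hδ : (0 : ℝ) < (a + 1 : ℝ) - x * 2 ^ k := by linarith
  obtain ⟨m, hm⟩ := exists_pow_lt_of_lt_one hδ (by norm_num : (1 : ℝ) / 2 < 1)
  have hfl : (2 ^ m * a + 2 ^ m - 1 : ℝ) ≤ x * 2 ^ (k + m) := by
    have := hrec m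
    have h2 := Int.floor_le (x * 2 ^ (k + m))
    rw [this] at h2
    push_cast at h2
    linarith
  have hpow : x * 2 ^ (k + m) = (x * 2 ^ k) * 2 ^ m := by
    rw [pow_add]; ring
  rw [hpow] at hfl
  have h2m : (0 : ℝ) < 2 ^ m := by positivity
  have hhalf : ((1 : ℝ) / 2) ^ m = (2 ^ m)⁻¹ := by rw [one_div, inv_pow]
  have h1 : (1 : ℝ) < ((a : ℝ) + 1 - x * 2 ^ k) * 2 ^ m := by
    have e : ((2 : ℝ) ^ m)⁻¹ * 2 ^ m = 1 := inv_mul_cancel₀ (ne_of_gt h2m)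
    rw [hhalf] at hm
    calc (1 : ℝ) = (2 ^ m)⁻¹ * 2 ^ m := e.symm
      _ < ((a : ℝ) + 1 - x * 2 ^ k) * 2 ^ m := by
          exact mul_lt_mul_of_pos_right hm h2m
  nlinarith [h1, hfl]

end Digits

lemma digit_lex {x y : ℝ} (hx : 0 ≤ x) (hy1 : y < 1) (hxy : x < y) :
    ∃ k, 1 ≤ k ∧ (∀ t, 1 ≤ t → t < k → binDigit x t = binDigit y t) ∧
      binDigit x k = 0 ∧ binDigit y k = 1 := by
  have hx1 : x < 1 := lt_trans hxy hy1
  have hy : 0 ≤ y := le_of_lt (lt_of_le_of_lt hx hxy)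
  have hne : ∃ i, binDigit x i ≠ binDigit y i := by
    by_contra hc
    push_neg at hc
    have hfl : ∀ i, ⌊x * 2 ^ i⌋ = ⌊y * 2 ^ i⌋ := fun i =>
      floor_congr hx hx1 hy hy1 i (fun t _ _ => hc t)
    have hclose : ∀ i : ℕ, (y - x) * 2 ^ i < 1 := by
      intro i
      have h1 : (⌊x * 2 ^ i⌋ : ℝ) ≤ x * 2 ^ i := Int.floor_le _
      have h2 : y * 2 ^ i < ⌊y * 2 ^ i⌋ + 1 := Int.lt_floor_add_one _
      rw [← hfl i] at h2
      linarith
    have hδ : (0 : ℝ) < y - x := by linarith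
    obtain ⟨m, hm⟩ := exists_pow_lt_of_lt_one hδ (by norm_num : (1 : ℝ) / 2 < 1)
    have h2m : (0 : ℝ) < 2 ^ m := by positivity
    have hhalf : ((1 : ℝ) / 2) ^ m = (2 ^ m)⁻¹ := by rw [one_div, inv_pow]
    rw [hhalf] at hm
    have h1 : (1 : ℝ) < (y - x) * 2 ^ m := by
      have e : ((2 : ℝ) ^ m)⁻¹ * 2 ^ m = 1 := inv_mul_cancel₀ (ne_of_gt h2m)
      calc (1 : ℝ) = (2 ^ m)⁻¹ * 2 ^ m := e.symm
        _ < (y - x) * 2 ^ m := mul_lt_mul_of_pos_right hm h2m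
    exact absurd h1 (not_lt.mpr (le_of_lt (hclose m)))
  classical
  set k := Nat.find hne with hk
  have hspec : binDigit x k ≠ binDigit y k := Nat.find_spec hne
  have hmin : ∀ t, t < k → binDigit x t = binDigit y t := fun t ht =>
    of_not_not (Nat.find_min hne ht)
  have hk1 : 1 ≤ k := by
    rcases Nat.eq_zero_or_pos k with h0 | h
    · exfalso
      apply hspec
      rw [h0]
      unfold binDigit
      rw [floor_one_digit hx hx1, floor_one_digit hy hy1]
    · exact h
  have hM : ⌊x * 2 ^ (k - 1)⌋ = ⌊y * 2 ^ (k - 1)⌋ :=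
    floor_congr hx hx1 hy hy1 (k - 1) (fun t ht1 ht2 => hmin t (by omega))
  have hxk := floor_pow_succ hx (k - 1)
  have hyk := floor_pow_succ hy (k - 1)
  rw [show k - 1 + 1 = k from by omega] at hxk hyk
  have hmono : ⌊x * 2 ^ k⌋ ≤ ⌊y * 2 ^ k⌋ :=
    Int.floor_le_floor (mul_le_mul_of_nonneg_right (le_of_lt hxy) (by positivity))
  have hbx := binDigit_zero_or_one x k
  have hby := binDigit_zero_or_one y k
  have hne2 : (binDigit x k : ℤ) ≠ (binDigit y k : ℤ) := fun h => hspec (by exact_mod_cast h)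
  have hbx' : (binDigit x k : ℤ) = 0 ∨ (binDigit x k : ℤ) = 1 := by exact_mod_cast hbx
  have hby' : (binDigit y k : ℤ) = 0 ∨ (binDigit y k : ℤ) = 1 := by exact_mod_cast hby
  have hfin : (binDigit x k : ℤ) = 0 ∧ (binDigit y k : ℤ) = 1 := by omega
  exact ⟨k, hk1, fun t ht1 ht2 => hmin t ht2, by exact_mod_cast hfin.1, by exact_mod_cast hfin.2⟩

section Tail

variable {α : ℝ} {q : ℕ → ℕ}

lemma rWeight_congr {b c : ℕ → ℕ} {i : ℕ} (h : ∀ t, 1 ≤ t → t < i → b t = c t) :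
    rWeight q b i = rWeight q c i := by
  unfold rWeight
  exact Finset.prod_congr rfl fun s _ => by rw [runCount_congr s h]

lemma term_nonneg (hα0 : 0 < α) (hqpos : ∀ s, 0 < q s) (c : ℕ → ℕ) (j : ℕ) :
    0 ≤ (c (j + 1) : ℝ) * rWeight q c (j + 1) * α ^ (j + 1) := by
  have := rWeight_pos hqpos c (j + 1)
  positivity

lemma term_le (hα0 : 0 < α) (hq0 : q 0 = 1) (hqpos : ∀ s, 0 < q s)
    (hqb : ∀ s₁ s₂ : ℕ, 0 < s₁ → 0 < s₂ →
      q s₁ * q (s₂ - 1) < q (s₁ + s₂) ∧ q (s₁ + s₂) ≤ q s₁ * q s₂)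
    {c : ℕ → ℕ} (hc : ∀ t, c t = 0 ∨ c t = 1) (j : ℕ) :
    (c (j + 1) : ℝ) * rWeight q c (j + 1) * α ^ (j + 1) ≤ (q j : ℝ) * α ^ (j + 1) := by
  rcases hc (j + 1) with h | h
  · rw [h]
    push_cast
    rw [zero_mul, zero_mul]
    positivity
  · rw [h]
    push_cast
    rw [one_mul]
    apply mul_le_mul_of_nonneg_right _ (by positivity)
    have := rWeight_le hq0 hqpos hqb (j + 1) c hc (by omega)
    simpa using this

lemma term_summable (hα0 : 0 < α) (hq0 : q 0 = 1) (hqpos : ∀ s, 0 < q s)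
    (hqb : ∀ s₁ s₂ : ℕ, 0 < s₁ → 0 < s₂ →
      q s₁ * q (s₂ - 1) < q (s₁ + s₂) ∧ q (s₁ + s₂) ≤ q s₁ * q s₂)
    (hsum : Summable fun j => (q j : ℝ) * α ^ (j + 1))
    {c : ℕ → ℕ} (hc : ∀ t, c t = 0 ∨ c t = 1) :
    Summable fun j => (c (j + 1) : ℝ) * rWeight q c (j + 1) * α ^ (j + 1) :=
  Summable.of_nonneg_of_le (term_nonneg hα0 hqpos c)
    (term_le hα0 hq0 hqpos hqb hc) hsum

lemma tail_lt (hα0 : 0 < α) (hq0 : q 0 = 1) (hqpos : ∀ s, 0 < q s)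
    (hqb : ∀ s₁ s₂ : ℕ, 0 < s₁ → 0 < s₂ →
      q s₁ * q (s₂ - 1) < q (s₁ + s₂) ∧ q (s₁ + s₂) ≤ q s₁ * q s₂)
    (hsum : Summable fun j => (q j : ℝ) * α ^ (j + 1))
    {c : ℕ → ℕ} (hc : ∀ t, c t = 0 ∨ c t = 1) (hz : ∃ j, 1 ≤ j ∧ c j = 0) :
    ∑' j : ℕ, (c (j + 1) : ℝ) * rWeight q c (j + 1) * α ^ (j + 1)
      < ∑' j : ℕ, (q j : ℝ) * α ^ (j + 1) := by
  obtain ⟨j, hj1, hcj⟩ := hz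
  apply Summable.tsum_lt_tsum (i := j - 1) (term_le hα0 hq0 hqpos hqb hc) _
    (term_summable hα0 hq0 hqpos hqb hsum hc) hsum
  have he : j - 1 + 1 = j := by omega
  rw [he, hcj]
  push_cast
  rw [zero_mul, zero_mul]
  have := hqpos (j - 1)
  positivity

end Tail


/-- Part (i) of the singularity criterion: f is strictly increasing on [0,1]. -/
theorem fCA_strictMonoOn (α : ℝ) (hα0 : 0 < α) (hα : α < 1/2)
    (q : ℕ → ℕ) (hq0 : q 0 = 1) (hqpos : ∀ s, 0 < q s)
    (hqb : ∀ s₁ s₂ : ℕ, 0 < s₁ → 0 < s₂ →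
      q s₁ * q (s₂ - 1) < q (s₁ + s₂) ∧ q (s₁ + s₂) ≤ q s₁ * q s₂)
    (hqc : ∀ s : ℕ, 0 < s →
      (q (s + 1) : ℝ) * α ^ (s + 2) < (q s : ℝ) * α ^ (s + 1) ∧
      (q s : ℝ) * α ^ (s + 1) < ∑' j : ℕ, (q (s + 1 + j) : ℝ) * α ^ (s + 2 + j))
    (hqd : ∑' j : ℕ, (q j : ℝ) * α ^ (j + 1) = 1)
    : StrictMonoOn (fCA α q) (Set.Icc 0 1) := by
  have hsum : Summable fun j => (q j : ℝ) * α ^ (j + 1) := by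
    by_contra hc
    rw [tsum_eq_zero_of_not_summable hc] at hqd
    norm_num at hqd
  intro x hx y hy hxy
  simp only [Set.mem_Icc] at hx hy
  have hx1 : x < 1 := lt_of_lt_of_le hxy hy.2
  have hbx : ∀ t, binDigit x t = 0 ∨ binDigit x t = 1 := binDigit_zero_or_one x
  have hfx : fCA α q x = ∑' i : ℕ,
      (binDigit x (i + 1) : ℝ) * rWeight q (binDigit x) (i + 1) * α ^ (i + 1) := by
    rw [fCA, if_neg (ne_of_lt hx1)]
  rcases eq_or_lt_of_le hy.2 with hy1 | hy1
  · -- y = 1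
    rw [hfx, hy1, fCA, if_pos rfl, ← hqd]
    apply tail_lt hα0 hq0 hqpos hqb hsum hbx
    obtain ⟨j, hj, hbj⟩ := exists_digit_zero hx.1 hx1 0
    exact ⟨j, by omega, hbj⟩
  · -- y < 1
    have hy0 : 0 ≤ y := le_trans hx.1 (le_of_lt hxy)
    have hby : ∀ t, binDigit y t = 0 ∨ binDigit y t = 1 := binDigit_zero_or_one y
    have hfy : fCA α q y = ∑' i : ℕ,
        (binDigit y (i + 1) : ℝ) * rWeight q (binDigit y) (i + 1) * α ^ (i + 1) := by
      rw [fCA, if_neg (ne_of_lt hy1)]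
    obtain ⟨k, hk1, hagree, hbxk, hbyk⟩ := digit_lex hx.1 hy1 hxy
    set Tx : ℕ → ℝ := fun i =>
      (binDigit x (i + 1) : ℝ) * rWeight q (binDigit x) (i + 1) * α ^ (i + 1) with hTx
    set Ty : ℕ → ℝ := fun i =>
      (binDigit y (i + 1) : ℝ) * rWeight q (binDigit y) (i + 1) * α ^ (i + 1) with hTy
    have hSx : Summable Tx := term_summable hα0 hq0 hqpos hqb hsum hbx
    have hSy : Summable Ty := term_summable hα0 hq0 hqpos hqb hsum hby
    -- splits
    have hsplitx : fCA α q x = (∑ i ∈ Finset.range k, Tx i) + ∑' i : ℕ, Tx (i + k) := by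
      rw [hfx, ← Summable.sum_add_tsum_nat_add k hSx]
    have hsplity : fCA α q y = (∑ i ∈ Finset.range k, Ty i) + ∑' i : ℕ, Ty (i + k) := by
      rw [hfy, ← Summable.sum_add_tsum_nat_add k hSy]
    -- partial sums agree below k-1
    have hpartial : ∀ i, i < k - 1 → Tx i = Ty i := by
      intro i hi
      rw [hTx, hTy]
      simp only
      rw [hagree (i + 1) (by omega) (by omega),
        rWeight_congr (fun t ht1 ht2 => hagree t ht1 (by omega))]
    have hTxk : Tx (k - 1) = 0 := by
      rw [hTx]
      simp only
      rw [show k - 1 + 1 = k from by omega, hbxk]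
      push_cast
      rw [zero_mul, zero_mul]
    set ρ : ℝ := rWeight q (binDigit x) k with hρ
    have hρpos : 0 < ρ := rWeight_pos hqpos _ _
    have hρy : rWeight q (binDigit y) k = ρ :=
      rWeight_congr (fun t ht1 ht2 => (hagree t ht1 ht2).symm)
    have hTyk : Ty (k - 1) = ρ * α ^ k := by
      rw [hTy]
      simp only
      rw [show k - 1 + 1 = k from by omega, hbyk, hρy]
      push_cast
      rw [one_mul]
    -- tail of x factors
    set c : ℕ → ℕ := fun t => binDigit x (k + t) with hc
    have hcz : ∀ t, c t = 0 ∨ c t = 1 := fun t => hbx (k + t)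
    have htermfact : ∀ i : ℕ, Tx (i + k) =
        ρ * α ^ k * ((c (i + 1) : ℝ) * rWeight q c (i + 1) * α ^ (i + 1)) := by
      intro i
      rw [hTx]
      simp only
      have hsplit := rWeight_split (q := q) hbxk (show k ≤ i + k + 1 by omega)
      rw [show i + k + 1 - k = i + 1 from by omega] at hsplit
      rw [hsplit]
      have hd : binDigit x (i + k + 1) = c (i + 1) := by rw [hc]; congr 1; omega
      rw [hd, ← hρ]
      rw [show i + k + 1 = k + (i + 1) from by omega, pow_add]
      ring
    have htailx : ∑' i : ℕ, Tx (i + k) =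
        ρ * α ^ k * ∑' j : ℕ, ((c (j + 1) : ℝ) * rWeight q c (j + 1) * α ^ (j + 1)) := by
      rw [← tsum_mul_left]
      exact tsum_congr htermfact
    have hczero : ∃ j, 1 ≤ j ∧ c j = 0 := by
      obtain ⟨j, hj, hbj⟩ := exists_digit_zero hx.1 hx1 k
      refine ⟨j - k, by omega, ?_⟩
      rw [hc]
      simp only
      rw [show k + (j - k) = j from by omega]
      exact hbj
    have htailx_lt : ∑' i : ℕ, Tx (i + k) < ρ * α ^ k := by
      rw [htailx]
      have h1 : ∑' j : ℕ, ((c (j + 1) : ℝ) * rWeight q c (j + 1) * α ^ (j + 1)) < 1 := by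
        rw [← hqd]
        exact tail_lt hα0 hq0 hqpos hqb hsum hcz hczero
      calc ρ * α ^ k * ∑' j : ℕ, ((c (j + 1) : ℝ) * rWeight q c (j + 1) * α ^ (j + 1))
          < ρ * α ^ k * 1 := by
            apply mul_lt_mul_of_pos_left h1 (by positivity)
        _ = ρ * α ^ k := mul_one _
    -- assemble
    have hsum_eq : ∑ i ∈ Finset.range k, Tx i =
        ∑ i ∈ Finset.range (k - 1), Ty i := by
      rw [show k = (k - 1) + 1 from by omega, Finset.sum_range_succ,
        show (k - 1) + 1 - 1 = k - 1 from by omega, hTxk, add_zero]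
      exact Finset.sum_congr rfl fun i hi => hpartial i (Finset.mem_range.mp hi)
    have hsumy_eq : ∑ i ∈ Finset.range k, Ty i =
        ∑ i ∈ Finset.range (k - 1), Ty i + Ty (k - 1) := by
      rw [show k = (k - 1) + 1 from by omega, Finset.sum_range_succ,
        show (k - 1) + 1 - 1 = k - 1 from by omega]
    have htaily_nonneg : 0 ≤ ∑' i : ℕ, Ty (i + k) :=
      tsum_nonneg fun i => term_nonneg hα0 hqpos _ _
    rw [hsplitx, hsplity, hsum_eq, hsumy_eq, hTyk]
    have := htailx_lt
    linarith
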